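/- Let u₀ ∈ (0, 1), c ∈ ℝ and ε > 0 satisfy u₀ < c + ε < 1. Define Λ⁺(r) = log(exp(r)·u₀ + 1 − u₀) − r·(c + ε), the cumulant generating function of the step y − c − ε for y a Bernoulli(u₀) random variable. Then Λ⁺ has a unique nonzero root r⁺, this root satisfies r⁺ > 0, and exp(r⁺) ≥ (1 − u₀)/(u₀·(c + ε)^{−1} − u₀). -/

import Mathlib

/-!
With `u = u₀` and `a = c + ε`, `Λ⁺ = shiftedBernoulliCGF u a`. It vanishes at `0`, and its
derivative `exp r * u / (exp r * u + 1 - u) - a` is strictly increasing in `r`, with its unique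
zero at `r̂ = log ((1 - u) / (u * a⁻¹ - u))`, which is positive because `u < a`. So `Λ⁺` strictly
decreases on `(-∞, r̂]` and strictly increases on `[r̂, ∞)`; since it grows at least like
`(1 - a) r + log u`, it has exactly one root besides `0`, and that root lies beyond `r̂`.
-/

open Real Set Filter

theorem exists_root_gt_of_strictAntiOn_Iic_of_strictMonoOn_Ici {f : ℝ → ℝ} {m : ℝ}
    (hf : Continuous f) (hanti : StrictAntiOn f (Iic m)) (hmono : StrictMonoOn f (Ici m))
    (hm : 0 < m) (hf0 : f 0 = 0) (htop : Tendsto f atTop atTop) :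
    ∃ r, m < r ∧ f r = 0 ∧ ∀ r', r' ≠ 0 → f r' = 0 → r' = r := by
  have hfm : f m < 0 := hf0 ▸ hanti (mem_Iic.2 hm.le) (mem_Iic.2 le_rfl) hm
  obtain ⟨R, hfR, hmR⟩ := ((htop.eventually_gt_atTop 0).and (eventually_gt_atTop m)).exists
  obtain ⟨r, ⟨hmr, -⟩, hfr⟩ := intermediate_value_Icc hmR.le hf.continuousOn ⟨hfm.le, hfR.le⟩
  have hmr' : m < r := hmr.lt_of_ne (by rintro rfl; linarith)
  refine ⟨r, hmr', hfr, fun r' hr'0 hfr' => ?_⟩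
  rcases le_or_gt r' m with hr'm | hmr''
  · exact absurd (hanti.injOn hr'm (mem_Iic.2 hm.le) (hfr'.trans hf0.symm)) hr'0
  · exact hmono.injOn (mem_Ici.2 hmr''.le) (mem_Ici.2 hmr'.le) (hfr'.trans hfr.symm)

noncomputable def shiftedBernoulliCGF (u a r : ℝ) : ℝ :=
  log (exp r * u + 1 - u) - r * a

noncomputable def shiftedBernoulliCGFArgmin (u a : ℝ) : ℝ :=
  log ((1 - u) / (u * a⁻¹ - u))

lemma mul_inv_sub_self_pos {u a : ℝ} (hu : 0 < u) (ha0 : 0 < a) (ha1 : a < 1) :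
    0 < u * a⁻¹ - u := by
  have : 1 < a⁻¹ := one_lt_inv_iff₀.2 ⟨ha0, ha1⟩
  nlinarith

namespace shiftedBernoulliCGFArgmin

variable {u a : ℝ}

lemma exp_eq (hu0 : 0 < u) (hu1 : u < 1) (ha0 : 0 < a) (ha1 : a < 1) :
    exp (shiftedBernoulliCGFArgmin u a) = (1 - u) / (u * a⁻¹ - u) :=
  exp_log (div_pos (sub_pos.2 hu1) (mul_inv_sub_self_pos hu0 ha0 ha1))

lemma pos (hu0 : 0 < u) (hua : u < a) (ha1 : a < 1) : 0 < shiftedBernoulliCGFArgmin u a := by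
  have ha0 := hu0.trans hua
  refine log_pos ((one_lt_div (mul_inv_sub_self_pos hu0 ha0 ha1)).2 ?_)
  have : u * a⁻¹ < 1 := by rwa [← div_eq_mul_inv, div_lt_one ha0]
  linarith

lemma lt_iff (hu0 : 0 < u) (hu1 : u < 1) (ha0 : 0 < a) (ha1 : a < 1) (r : ℝ) :
    shiftedBernoulliCGFArgmin u a < r ↔ 1 - u < exp r * (u * a⁻¹ - u) := by
  have hk := mul_inv_sub_self_pos hu0 ha0 ha1
  rw [shiftedBernoulliCGFArgmin, log_lt_iff_lt_exp (div_pos (sub_pos.2 hu1) hk), div_lt_iff₀ hk]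

lemma gt_iff (hu0 : 0 < u) (hu1 : u < 1) (ha0 : 0 < a) (ha1 : a < 1) (r : ℝ) :
    r < shiftedBernoulliCGFArgmin u a ↔ exp r * (u * a⁻¹ - u) < 1 - u := by
  have hk := mul_inv_sub_self_pos hu0 ha0 ha1
  rw [shiftedBernoulliCGFArgmin, lt_log_iff_exp_lt (div_pos (sub_pos.2 hu1) hk), lt_div_iff₀ hk]

end shiftedBernoulliCGFArgmin

namespace shiftedBernoulliCGF

variable {u a : ℝ}

lemma mgf_pos (hu0 : 0 ≤ u) (hu1 : u ≤ 1) (r : ℝ) : 0 < exp r * u + 1 - u := by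
  rcases hu1.lt_or_eq with hu1 | rfl
  · nlinarith [exp_pos r]
  · simpa using exp_pos r

@[simp] lemma apply_zero : shiftedBernoulliCGF u a 0 = 0 := by
  simp [shiftedBernoulliCGF]

lemma hasDerivAt (hu0 : 0 ≤ u) (hu1 : u ≤ 1) (r : ℝ) :
    HasDerivAt (shiftedBernoulliCGF u a) (exp r * u / (exp r * u + 1 - u) - a) r := by
  have hmgf : HasDerivAt (fun r => exp r * u + 1 - u) (exp r * u) r :=
    (((hasDerivAt_exp r).mul_const u).add_const 1).sub_const u
  have h := (hmgf.log (mgf_pos hu0 hu1 r).ne').sub ((hasDerivAt_id' r).mul_const a)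
  rwa [one_mul] at h

lemma continuous (hu0 : 0 ≤ u) (hu1 : u ≤ 1) : Continuous (shiftedBernoulliCGF u a) :=
  continuous_iff_continuousAt.2 fun r => (hasDerivAt (a := a) hu0 hu1 r).continuousAt

lemma deriv_eq (hu0 : 0 ≤ u) (hu1 : u ≤ 1) (ha : a ≠ 0) (r : ℝ) :
    deriv (shiftedBernoulliCGF u a) r
      = a * (exp r * (u * a⁻¹ - u) - (1 - u)) / (exp r * u + 1 - u) := by
  rw [(hasDerivAt hu0 hu1 r).deriv]
  field_simp [(mgf_pos hu0 hu1 r).ne']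
  ring

lemma tendsto_atTop (hu0 : 0 < u) (hu1 : u ≤ 1) (ha1 : a < 1) :
    Tendsto (shiftedBernoulliCGF u a) atTop atTop := by
  refine tendsto_atTop_mono (fun r => ?_)
    (tendsto_atTop_add_const_right _ (log u) (tendsto_id.const_mul_atTop (sub_pos.2 ha1)))
  have hlog : r + log u ≤ log (exp r * u + 1 - u) := by
    rw [← log_exp r, ← log_mul (exp_pos r).ne' hu0.ne', log_exp]
    exact log_le_log (by positivity) (by linarith)
  simp only [shiftedBernoulliCGF, id]
  linarith

lemma strictMonoOn_Ici (hu0 : 0 < u) (hu1 : u < 1) (ha0 : 0 < a) (ha1 : a < 1) :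
    StrictMonoOn (shiftedBernoulliCGF u a) (Ici (shiftedBernoulliCGFArgmin u a)) := by
  refine strictMonoOn_of_deriv_pos (convex_Ici _) (continuous hu0.le hu1.le).continuousOn
    fun r hr => ?_
  rw [interior_Ici, mem_Ioi, shiftedBernoulliCGFArgmin.lt_iff hu0 hu1 ha0 ha1] at hr
  rw [deriv_eq hu0.le hu1.le ha0.ne']
  exact div_pos (mul_pos ha0 (sub_pos.2 hr)) (mgf_pos hu0.le hu1.le r)

lemma strictAntiOn_Iic (hu0 : 0 < u) (hu1 : u < 1) (ha0 : 0 < a) (ha1 : a < 1) :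
    StrictAntiOn (shiftedBernoulliCGF u a) (Iic (shiftedBernoulliCGFArgmin u a)) := by
  refine strictAntiOn_of_deriv_neg (convex_Iic _) (continuous hu0.le hu1.le).continuousOn
    fun r hr => ?_
  rw [interior_Iic, mem_Iio, shiftedBernoulliCGFArgmin.gt_iff hu0 hu1 ha0 ha1] at hr
  rw [deriv_eq hu0.le hu1.le ha0.ne']
  exact div_neg_of_neg_of_pos (mul_neg_of_pos_of_neg ha0 (sub_neg.2 hr))
    (mgf_pos hu0.le hu1.le r)

end shiftedBernoulliCGF

theorem upper_cgf_unique_root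
    (u₀ c ε : ℝ) (hu₀ : u₀ ∈ Set.Ioo (0 : ℝ) 1)
    (h1 : u₀ < c + ε) (h2 : c + ε < 1)
    (Λp : ℝ → ℝ)
    (hΛ : ∀ r, Λp r = Real.log (Real.exp r * u₀ + 1 - u₀) - r * (c + ε)) :
    ∃ rp : ℝ, (rp ≠ 0 ∧ Λp rp = 0) ∧
      (∀ r', r' ≠ 0 → Λp r' = 0 → r' = rp) ∧
      0 < rp ∧ (1 - u₀) / (u₀ * (c + ε)⁻¹ - u₀) ≤ Real.exp rp := by
  obtain ⟨hu0, hu1⟩ := hu₀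
  have ha0 : 0 < c + ε := hu0.trans h1
  obtain rfl : Λp = shiftedBernoulliCGF u₀ (c + ε) := funext hΛ
  have hm := shiftedBernoulliCGFArgmin.pos hu0 h1 h2
  obtain ⟨rp, hmrp, hrp, huniq⟩ := exists_root_gt_of_strictAntiOn_Iic_of_strictMonoOn_Ici
    (shiftedBernoulliCGF.continuous hu0.le hu1.le)
    (shiftedBernoulliCGF.strictAntiOn_Iic hu0 hu1 ha0 h2)
    (shiftedBernoulliCGF.strictMonoOn_Ici hu0 hu1 ha0 h2) hm shiftedBernoulliCGF.apply_zero
    (shiftedBernoulliCGF.tendsto_atTop hu0 hu1.le h2)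
  refine ⟨rp, ⟨(hm.trans hmrp).ne', hrp⟩, huniq, hm.trans hmrp, ?_⟩
  rw [← shiftedBernoulliCGFArgmin.exp_eq hu0 hu1 ha0 h2]
  exact exp_le_exp.2 hmrp.le
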